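/- Fix d ≥ 1, constants L > 0, M ≥ 0, an integer n ≥ 1, and a finite measure Π on a measurable space U. Let ψ : ℝ → ℝ be twice continuously differentiable with |ψ'(r)| ≤ 1 for all r ∈ ℝ and 0 ≤ ψ''(r) ≤ 2/(L n r²) for all r ≠ 0. Let x = (x₁,x₂), y = (y₁,y₂) ∈ ℝ^d × ℝ^d with x ≠ y and x₂ ≠ y₂, and set |x−y| = (|x₁−y₁|² + |x₂−y₂|²)^{1/2}. Let b₁, b₂ ∈ ℝ^d and d×d real matrices σ₁, σ₂ satisfy |b₁−b₂|² + ‖σ₁−σ₂‖² ≤ L|x−y|², let g : U → ℝ^d be measurable with ∫_U |g(u)|² Π(du) ≤ L|x−y|², and let (r_i)_{i∈ℕ} be nonnegative reals with ∑_{i∈ℕ} r_i ≤ M|x−y|. Put Ā = |(σ₁−σ₂)ᵀ(x₂−y₂)|²/|x₂−y₂|². Then (1/2)(ψ'(|x−y|)/|x−y|)[‖σ₁−σ₂‖² − Ā + 2⟨x₂−y₂, b₁−b₂⟩ + 2⟨x₁−y₁, x₂−y₂⟩] + (1/2)ψ''(|x−y|) Ā + ∫_U [ψ((|x₁−y₁|²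 + |x₂−y₂+g(u)|²)^{1/2}) − ψ(|x−y|)] Π(du) + ∑_{i∈ℕ} r_i ≤ 1/n + (L + 1 + (Π(U)L)^{1/2} + M)·|x−y|. -/

import Mathlib

/-!
With ρ = |x − y|, the four terms are bounded separately. Since |ψ'| ≤ 1, the first-order term is
at most |…|/(2ρ), and Cauchy–Schwarz together with 2ab ≤ a² + b² bounds the bracket by
(L + 2)ρ². The bound on ψ'' is calibrated so that, with Ā ≤ ‖σ₁ − σ₂‖² ≤ Lρ², the second-order
term is at most 1/n. As |ψ'| ≤ 1, ψ is 1-Lipschitz, and a jump by g(u) changes the norm of the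
pair by at most |g(u)|, so Cauchy–Schwarz in L²(Π) bounds the jump integral by (Π(U)·Lρ²)^{1/2}.
-/

open MeasureTheory

/-- Euclidean norm of a vector in `ℝ^d`. -/
noncomputable def eucNorm {d : ℕ} (v : Fin d → ℝ) : ℝ := Real.sqrt (∑ i, v i ^ 2)

/-- Euclidean inner product in `ℝ^d`. -/
noncomputable def eucInner {d : ℕ} (v w : Fin d → ℝ) : ℝ := ∑ i, v i * w i

/-- Frobenius norm of a `d × d` real matrix. -/
noncomputable def frobNorm {d : ℕ} (A : Matrix (Fin d) (Fin d) ℝ) : ℝ :=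
  Real.sqrt (∑ i, ∑ j, A i j ^ 2)

lemma abs_sqrt_norm_sq_add_sub_le {E F : Type*} [SeminormedAddCommGroup E]
    [SeminormedAddCommGroup F] (w : E) (z g : F) :
    |√(‖w‖ ^ 2 + ‖z + g‖ ^ 2) - √(‖w‖ ^ 2 + ‖z‖ ^ 2)| ≤ ‖g‖ := by
  have h := abs_norm_sub_norm_le (WithLp.toLp 2 (w, z + g)) (WithLp.toLp 2 (w, z))
  simpa [WithLp.prod_norm_eq_of_L2, ← WithLp.toLp_sub] using h

lemma integral_le_sqrt_measureReal_mul_integral_sq {U : Type*} [MeasurableSpace U]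
    {ν : Measure U} [IsFiniteMeasure ν] {f : U → ℝ} (hf0 : 0 ≤ f)
    (hf : AEStronglyMeasurable f ν) (hf2 : Integrable (fun u => f u ^ 2) ν) :
    ∫ u, f u ∂ν ≤ √(ν.real Set.univ * ∫ u, f u ^ 2 ∂ν) := by
  have h := integral_mul_le_Lp_mul_Lq_of_nonneg Real.HolderConjugate.two_two
    (Filter.Eventually.of_forall fun _ => zero_le_one) (Filter.Eventually.of_forall hf0)
    (memLp_const (1 : ℝ))
    (by rw [ENNReal.ofReal_ofNat]; exact (memLp_two_iff_integrable_sq hf).2 hf2)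
  simp only [one_mul, Real.one_rpow, integral_const, smul_eq_mul, mul_one] at h
  rw [Real.sqrt_eq_rpow, Real.mul_rpow measureReal_nonneg
    (integral_nonneg fun u => sq_nonneg (f u))]
  simpa only [Real.rpow_two] using h

lemma lipschitzWith_one_of_abs_deriv_le {ψ : ℝ → ℝ} (hψ : Differentiable ℝ ψ)
    (hψ' : ∀ r, |deriv ψ r| ≤ 1) : LipschitzWith 1 ψ :=
  lipschitzWith_of_nnnorm_deriv_le hψ fun r => by
    rw [← NNReal.coe_le_coe, coe_nnnorm, Real.norm_eq_abs, NNReal.coe_one]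
    exact hψ' r

lemma half_mul_mul_le_inv_natCast {c A L ρ : ℝ} {n : ℕ} (hL : 0 < L) (hρ : 0 < ρ)
    (hc : c ≤ 2 / (L * n * ρ ^ 2)) (hA₀ : 0 ≤ A) (hA : A ≤ L * ρ ^ 2) :
    1 / 2 * c * A ≤ 1 / n := calc
  1 / 2 * c * A ≤ 1 / 2 * (2 / (L * n * ρ ^ 2)) * (L * ρ ^ 2) := by gcongr
  _ = 1 / n := by field_simp

lemma half_mul_div_mul_le {a ρ Q K : ℝ} (ha : |a| ≤ 1) (hρ : 0 < ρ) (hQ : |Q| ≤ K * ρ ^ 2) :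
    1 / 2 * (a / ρ) * Q ≤ K / 2 * ρ := calc
  1 / 2 * (a / ρ) * Q ≤ 1 / 2 * (|a| / ρ) * |Q| := (le_abs_self _).trans_eq <| by
    rw [abs_mul, abs_mul, abs_div a, abs_of_pos hρ]; norm_num
  _ ≤ 1 / 2 * (1 / ρ) * (K * ρ ^ 2) := by gcongr
  _ = K / 2 * ρ := by field_simp

section Euclidean

variable {d : ℕ}

lemma eucNorm_eq_norm (v : Fin d → ℝ) : eucNorm v = ‖WithLp.toLp 2 v‖ := by
  simp [EuclideanSpace.norm_eq, eucNorm]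

lemma eucInner_eq_inner (v w : Fin d → ℝ) :
    eucInner v w = inner ℝ (WithLp.toLp 2 v) (WithLp.toLp 2 w) := by
  simp [eucInner, PiLp.inner_apply, mul_comm]

lemma eucNorm_nonneg (v : Fin d → ℝ) : 0 ≤ eucNorm v := Real.sqrt_nonneg _

lemma eucNorm_sq (v : Fin d → ℝ) : eucNorm v ^ 2 = ∑ i, v i ^ 2 :=
  Real.sq_sqrt (Finset.sum_nonneg fun _ _ => sq_nonneg _)

lemma frobNorm_sq (A : Matrix (Fin d) (Fin d) ℝ) : frobNorm A ^ 2 = ∑ i, ∑ j, A i j ^ 2 :=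
  Real.sq_sqrt (Finset.sum_nonneg fun _ _ => Finset.sum_nonneg fun _ _ => sq_nonneg _)

@[fun_prop]
lemma continuous_eucNorm : Continuous (eucNorm (d := d)) := by
  simp_rw [funext eucNorm_eq_norm]
  fun_prop

lemma two_mul_abs_eucInner_le (v w : Fin d → ℝ) :
    2 * |eucInner v w| ≤ eucNorm v ^ 2 + eucNorm w ^ 2 := by
  have h : |eucInner v w| ≤ eucNorm v * eucNorm w := by
    rw [eucInner_eq_inner, eucNorm_eq_norm, eucNorm_eq_norm]
    exact abs_real_inner_le_norm _ _
  nlinarith [two_mul_le_add_sq (eucNorm v) (eucNorm w)]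

lemma abs_sqrt_eucNorm_sq_add_sub_le (w z g : Fin d → ℝ) :
    |√(eucNorm w ^ 2 + eucNorm (z + g) ^ 2) - √(eucNorm w ^ 2 + eucNorm z ^ 2)|
      ≤ eucNorm g := by
  simpa only [eucNorm_eq_norm, WithLp.toLp_add] using
    abs_sqrt_norm_sq_add_sub_le (WithLp.toLp 2 w) (WithLp.toLp 2 z) (WithLp.toLp 2 g)

lemma eucNorm_transpose_mulVec_sq_div_le (A : Matrix (Fin d) (Fin d) ℝ) (z : Fin d → ℝ) :
    eucNorm (A.transpose.mulVec z) ^ 2 / eucNorm z ^ 2 ≤ frobNorm A ^ 2 := by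
  refine div_le_of_le_mul₀ (sq_nonneg _) (sq_nonneg _) ?_
  rw [eucNorm_sq, frobNorm_sq, eucNorm_sq, Finset.sum_comm, Finset.sum_mul]
  refine Finset.sum_le_sum fun j _ => ?_
  have : A.transpose.mulVec z j = ∑ i, A i j * z i := by
    simp [Matrix.mulVec, dotProduct, Matrix.transpose]
  rw [this]
  exact Finset.sum_mul_sq_le_sq_mul_sq _ _ _

lemma sqrt_eucNorm_sq_add_pos {w z : Fin d → ℝ} (h : (w, z) ≠ 0) :
    0 < √(eucNorm w ^ 2 + eucNorm z ^ 2) := by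
  have hw : ∀ v : Fin d → ℝ, eucNorm v ^ 2 = 0 ↔ v = 0 := by simp [eucNorm_eq_norm]
  refine Real.sqrt_pos.2 (lt_of_le_of_ne (by positivity) fun h0 => h ?_)
  rw [eq_comm, add_eq_zero_iff_of_nonneg (sq_nonneg _) (sq_nonneg _), hw, hw] at h0
  exact Prod.ext h0.1 h0.2

lemma abs_drift_diffusion_le {L : ℝ} (w z Δb : Fin d → ℝ) (Δσ : Matrix (Fin d) (Fin d) ℝ)
    (hLip : eucNorm Δb ^ 2 + frobNorm Δσ ^ 2 ≤ L * (eucNorm w ^ 2 + eucNorm z ^ 2)) :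
    |frobNorm Δσ ^ 2 - eucNorm (Δσ.transpose.mulVec z) ^ 2 / eucNorm z ^ 2
        + 2 * eucInner z Δb + 2 * eucInner w z|
      ≤ (L + 2) * (eucNorm w ^ 2 + eucNorm z ^ 2) := by
  have hA := eucNorm_transpose_mulVec_sq_div_le Δσ z
  have hA₀ : 0 ≤ eucNorm (Δσ.transpose.mulVec z) ^ 2 / eucNorm z ^ 2 := by positivity
  have hzb := two_mul_abs_eucInner_le z Δb
  have hwz := two_mul_abs_eucInner_le w z
  rw [abs_le]
  constructor <;> linarith [neg_abs_le (eucInner z Δb), le_abs_self (eucInner z Δb),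
    neg_abs_le (eucInner w z), le_abs_self (eucInner w z), sq_nonneg (frobNorm Δσ),
    sq_nonneg (eucNorm w)]

lemma integral_jump_le {U : Type*} [MeasurableSpace U] {ν : Measure U} [IsFiniteMeasure ν]
    {ψ : ℝ → ℝ} (hψ : LipschitzWith 1 ψ) (w z : Fin d → ℝ) {g : U → Fin d → ℝ}
    (hg : Measurable g) (hg2 : Integrable (fun u => eucNorm (g u) ^ 2) ν) :
    ∫ u, (ψ (√(eucNorm w ^ 2 + eucNorm (z + g u) ^ 2)) - ψ (√(eucNorm w ^ 2 + eucNorm z ^ 2))) ∂ν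
      ≤ √(ν.real Set.univ * ∫ u, eucNorm (g u) ^ 2 ∂ν) := by
  have hgm : AEStronglyMeasurable (fun u => eucNorm (g u)) ν :=
    (continuous_eucNorm.measurable.comp hg).aestronglyMeasurable
  have hgi : Integrable (fun u => eucNorm (g u)) ν :=
    ((memLp_two_iff_integrable_sq hgm).2 hg2).integrable one_le_two
  have hpt : ∀ u, |ψ (√(eucNorm w ^ 2 + eucNorm (z + g u) ^ 2))
      - ψ (√(eucNorm w ^ 2 + eucNorm z ^ 2))| ≤ eucNorm (g u) := fun u => by
    have := hψ.dist_le_mul (√(eucNorm w ^ 2 + eucNorm (z + g u) ^ 2))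
      (√(eucNorm w ^ 2 + eucNorm z ^ 2))
    rw [NNReal.coe_one, one_mul, Real.dist_eq, Real.dist_eq] at this
    exact this.trans (abs_sqrt_eucNorm_sq_add_sub_le w z (g u))
  have hψc := hψ.continuous
  have hmeas : AEStronglyMeasurable (fun u => ψ (√(eucNorm w ^ 2 + eucNorm (z + g u) ^ 2))
      - ψ (√(eucNorm w ^ 2 + eucNorm z ^ 2))) ν :=
    ((by fun_prop : Continuous fun v => ψ (√(eucNorm w ^ 2 + eucNorm (z + v) ^ 2))
      - ψ (√(eucNorm w ^ 2 + eucNorm z ^ 2))).measurable.comp hg).aestronglyMeasurable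
  calc _ ≤ ∫ u, eucNorm (g u) ∂ν :=
        integral_mono (hgi.mono' hmeas (ae_of_all _ hpt)) hgi fun u => (le_abs_self _).trans (hpt u)
    _ ≤ _ := integral_le_sqrt_measureReal_mul_integral_sq (fun u => eucNorm_nonneg _) hgm hg2

end Euclidean

theorem coupling_operator_estimate_general
    {d : ℕ} (L M : ℝ) (hL : 0 < L) (n : ℕ)
    {U : Type*} [MeasurableSpace U] (ν : Measure U) [IsFiniteMeasure ν]
    (ψ : ℝ → ℝ) (hψ : ContDiff ℝ 2 ψ)
    (hψ' : ∀ r : ℝ, |deriv ψ r| ≤ 1)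
    (hψ'' : ∀ r : ℝ, r ≠ 0 →
      0 ≤ deriv (deriv ψ) r ∧ deriv (deriv ψ) r ≤ 2 / (L * n * r ^ 2))
    (x₁ x₂ y₁ y₂ : Fin d → ℝ)
    (hxy : (x₁, x₂) ≠ (y₁, y₂))
    (b₁ b₂ : Fin d → ℝ) (σ₁ σ₂ : Matrix (Fin d) (Fin d) ℝ)
    (hLip : eucNorm (b₁ - b₂) ^ 2 + frobNorm (σ₁ - σ₂) ^ 2
      ≤ L * Real.sqrt (eucNorm (x₁ - y₁) ^ 2 + eucNorm (x₂ - y₂) ^ 2) ^ 2)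
    (g : U → Fin d → ℝ) (hg : Measurable g)
    (hg2 : Integrable (fun u => eucNorm (g u) ^ 2) ν)
    (hgL : ∫ u, eucNorm (g u) ^ 2 ∂ν
      ≤ L * Real.sqrt (eucNorm (x₁ - y₁) ^ 2 + eucNorm (x₂ - y₂) ^ 2) ^ 2)
    (r : ℕ → ℝ)
    (hrbd : ∑' i, r i
      ≤ M * Real.sqrt (eucNorm (x₁ - y₁) ^ 2 + eucNorm (x₂ - y₂) ^ 2)) :
    (1 / 2) * (deriv ψ (Real.sqrt (eucNorm (x₁ - y₁) ^ 2 + eucNorm (x₂ - y₂) ^ 2))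
        / Real.sqrt (eucNorm (x₁ - y₁) ^ 2 + eucNorm (x₂ - y₂) ^ 2))
      * (frobNorm (σ₁ - σ₂) ^ 2
          - eucNorm ((σ₁ - σ₂).transpose.mulVec (x₂ - y₂)) ^ 2 / eucNorm (x₂ - y₂) ^ 2
          + 2 * eucInner (x₂ - y₂) (b₁ - b₂) + 2 * eucInner (x₁ - y₁) (x₂ - y₂))
    + (1 / 2) * deriv (deriv ψ) (Real.sqrt (eucNorm (x₁ - y₁) ^ 2 + eucNorm (x₂ - y₂) ^ 2))
      * (eucNorm ((σ₁ - σ₂).transpose.mulVec (x₂ - y₂)) ^ 2 / eucNorm (x₂ - y₂) ^ 2)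
    + (∫ u, (ψ (Real.sqrt (eucNorm (x₁ - y₁) ^ 2 + eucNorm (x₂ - y₂ + g u) ^ 2))
        - ψ (Real.sqrt (eucNorm (x₁ - y₁) ^ 2 + eucNorm (x₂ - y₂) ^ 2))) ∂ν)
    + (∑' i, r i)
    ≤ 1 / n + (L + 1 + Real.sqrt ((ν Set.univ).toReal * L) + M)
        * Real.sqrt (eucNorm (x₁ - y₁) ^ 2 + eucNorm (x₂ - y₂) ^ 2) := by
  set ρ := √(eucNorm (x₁ - y₁) ^ 2 + eucNorm (x₂ - y₂) ^ 2)
  have hρ : 0 < ρ := sqrt_eucNorm_sq_add_pos (by rwa [← Prod.mk_sub_mk, sub_ne_zero])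
  have hρsq : ρ ^ 2 = eucNorm (x₁ - y₁) ^ 2 + eucNorm (x₂ - y₂) ^ 2 := Real.sq_sqrt (by positivity)
  have hdrift := half_mul_div_mul_le (hψ' ρ) hρ
    (by rw [hρsq]; exact abs_drift_diffusion_le _ _ _ _ (by rwa [← hρsq]))
  have hdiffusion := half_mul_mul_le_inv_natCast hL hρ (hψ'' ρ hρ.ne').2 (by positivity)
    ((eucNorm_transpose_mulVec_sq_div_le (σ₁ - σ₂) (x₂ - y₂)).trans
      (by linarith [sq_nonneg (eucNorm (b₁ - b₂))]))
  have hjump := integral_jump_le (ν := ν)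
    (lipschitzWith_one_of_abs_deriv_le (hψ.differentiable (by norm_num)) hψ') (x₁ - y₁) (x₂ - y₂)
    hg hg2
  rw [measureReal_def] at hjump
  have hjump_le : √((ν Set.univ).toReal * ∫ u, eucNorm (g u) ^ 2 ∂ν)
      ≤ √((ν Set.univ).toReal * L) * ρ := calc
    _ ≤ √((ν Set.univ).toReal * (L * ρ ^ 2)) := by gcongr
    _ = √((ν Set.univ).toReal * L) * ρ := by
      rw [← mul_assoc, Real.sqrt_mul' _ (sq_nonneg ρ), Real.sqrt_sq hρ.le]
  linarith [mul_pos hL hρ]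

/-- The explicit analytic form of Lemma 3.3: the coupling operator applied
to the test function `f_n = ψ_n(|x - y|) + 1_{k≠l}` at `(x,k,y,k)` is bounded by
`1/n + (L + 1 + (Π(U)L)^{1/2} + M)·|x - y|`. -/
theorem coupling_operator_estimate
    {d : ℕ} (hd : 1 ≤ d) (L M : ℝ) (hL : 0 < L) (hM : 0 ≤ M) (n : ℕ) (hn : 1 ≤ n)
    {U : Type*} [MeasurableSpace U] (ν : Measure U) [IsFiniteMeasure ν]
    (ψ : ℝ → ℝ) (hψ : ContDiff ℝ 2 ψ)
    (hψ' : ∀ r : ℝ, |deriv ψ r| ≤ 1)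
    (hψ'' : ∀ r : ℝ, r ≠ 0 →
      0 ≤ deriv (deriv ψ) r ∧ deriv (deriv ψ) r ≤ 2 / (L * n * r ^ 2))
    (x₁ x₂ y₁ y₂ : Fin d → ℝ)
    (hxy : (x₁, x₂) ≠ (y₁, y₂)) (hx₂y₂ : x₂ ≠ y₂)
    (b₁ b₂ : Fin d → ℝ) (σ₁ σ₂ : Matrix (Fin d) (Fin d) ℝ)
    (hLip : eucNorm (b₁ - b₂) ^ 2 + frobNorm (σ₁ - σ₂) ^ 2
      ≤ L * Real.sqrt (eucNorm (x₁ - y₁) ^ 2 + eucNorm (x₂ - y₂) ^ 2) ^ 2)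
    (g : U → Fin d → ℝ) (hg : Measurable g)
    (hg2 : Integrable (fun u => eucNorm (g u) ^ 2) ν)
    (hgL : ∫ u, eucNorm (g u) ^ 2 ∂ν
      ≤ L * Real.sqrt (eucNorm (x₁ - y₁) ^ 2 + eucNorm (x₂ - y₂) ^ 2) ^ 2)
    (r : ℕ → ℝ) (hr0 : ∀ i, 0 ≤ r i) (hrsum : Summable r)
    (hrbd : ∑' i, r i
      ≤ M * Real.sqrt (eucNorm (x₁ - y₁) ^ 2 + eucNorm (x₂ - y₂) ^ 2)) :
    (1 / 2) * (deriv ψ (Real.sqrt (eucNorm (x₁ - y₁) ^ 2 + eucNorm (x₂ - y₂) ^ 2))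
        / Real.sqrt (eucNorm (x₁ - y₁) ^ 2 + eucNorm (x₂ - y₂) ^ 2))
      * (frobNorm (σ₁ - σ₂) ^ 2
          - eucNorm ((σ₁ - σ₂).transpose.mulVec (x₂ - y₂)) ^ 2 / eucNorm (x₂ - y₂) ^ 2
          + 2 * eucInner (x₂ - y₂) (b₁ - b₂) + 2 * eucInner (x₁ - y₁) (x₂ - y₂))
    + (1 / 2) * deriv (deriv ψ) (Real.sqrt (eucNorm (x₁ - y₁) ^ 2 + eucNorm (x₂ - y₂) ^ 2))
      * (eucNorm ((σ₁ - σ₂).transpose.mulVec (x₂ - y₂)) ^ 2 / eucNorm (x₂ - y₂) ^ 2)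
    + (∫ u, (ψ (Real.sqrt (eucNorm (x₁ - y₁) ^ 2 + eucNorm (x₂ - y₂ + g u) ^ 2))
        - ψ (Real.sqrt (eucNorm (x₁ - y₁) ^ 2 + eucNorm (x₂ - y₂) ^ 2))) ∂ν)
    + (∑' i, r i)
    ≤ 1 / n + (L + 1 + Real.sqrt ((ν Set.univ).toReal * L) + M)
        * Real.sqrt (eucNorm (x₁ - y₁) ^ 2 + eucNorm (x₂ - y₂) ^ 2) :=
  coupling_operator_estimate_general L M hL n ν ψ hψ hψ' hψ'' x₁ x₂ y₁ y₂ hxy b₁ b₂ σ₁ σ₂ hLip g hg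
    hg2 hgL r hrbd
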